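/- Consider the walk with transition kernel Q_p = p·Q_in + q·Q_out, q=1−p, p∈[0,1). Let 0<ℓ<n be integers, x∈L_ℓ, and let τ_o = min{t≥0 : X(t)=o} and τ_n = min{t≥0 : X(t)∈L_n}. If p≠q then P_x(τ_o<τ_n) = (r^n−r^ℓ)/(r^n−1) where r=p/q; if p=q=1/2 then P_x(τ_o<τ_n) = (n−ℓ)/n. In particular this probability depends only on ℓ=‖x‖ and not on the choice of x∈L_ℓ. -/

import Mathlib

open MeasureTheory Filter
open scoped Classical ENNReal

abbrev Z2 : Type := ℤ × ℤ

def origin : Z2 := (0, 0)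

def dnorm (x : Z2) : ℕ := x.1.natAbs + x.2.natAbs

def layer (k : ℕ) : Set Z2 := {x | dnorm x = k}

def layerCard (k : ℕ) : ℕ := if k = 0 then 1 else 4 * k

def diamond (r : ℝ) : Set Z2 := {x | (dnorm x : ℝ) ≤ r}

noncomputable def diamondF (n : ℕ) : Finset Z2 :=
  (Finset.Icc (-(n : ℤ), -(n : ℤ)) ((n : ℤ), (n : ℤ))).filter fun x => dnorm x ≤ n

def vol (n : ℕ) : ℕ := 2 * n * (n + 1) + 1

/-- A uniformly layered walk kernel: a Markov transition kernel on `ℤ²`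
satisfying conditions (U1), (U2), (U3). -/
structure IsULW (Q : Z2 → Z2 → ℝ) : Prop where
  nonneg : ∀ x y, 0 ≤ Q x y
  rowSum : ∀ x, ∑' y, Q x y = 1
  u1 : ∀ x y, dnorm x + 1 < dnorm y → Q x y = 0
  u2 : ∀ x, ∃ y, dnorm y = dnorm x + 1 ∧ 0 < Q x y
  u3 : ∀ (k : ℕ) (y z : Z2), dnorm y = dnorm z →
    ∑' x : layer k, Q x.1 y = ∑' x : layer k, Q x.1 z

/-- `X` is a Markov chain with transition kernel `Q` started at `x0`:
all finite-dimensional distributions are specified. -/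
def IsWalkFrom {Ω : Type} [MeasurableSpace Ω] (P : Measure Ω)
    (X : ℕ → Ω → Z2) (Q : Z2 → Z2 → ℝ) (x0 : Z2) : Prop :=
  ∀ (t : ℕ) (path : ℕ → Z2),
    P {ω | ∀ s ≤ t, X s ω = path s} =
      ENNReal.ofReal ((if path 0 = x0 then (1 : ℝ) else 0) *
        ∏ s ∈ Finset.range t, Q (path s) (path (s + 1)))

/-- `X` is a Markov chain with transition kernel `Q` started from the uniform
distribution on layer `L_k`. -/
def IsWalkUniform {Ω : Type} [MeasurableSpace Ω] (P : Measure Ω)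
    (X : ℕ → Ω → Z2) (Q : Z2 → Z2 → ℝ) (k : ℕ) : Prop :=
  ∀ (t : ℕ) (path : ℕ → Z2),
    P {ω | ∀ s ≤ t, X s ω = path s} =
      ENNReal.ofReal ((if dnorm (path 0) = k then (1 : ℝ) / layerCard k else 0) *
        ∏ s ∈ Finset.range t, Q (path s) (path (s + 1)))

/-- The walks `Y 0, Y 1, …` are independent. -/
def IndepWalks {Ω : Type} [MeasurableSpace Ω] (P : Measure Ω)
    (Y : ℕ → ℕ → Ω → Z2) : Prop :=
  ∀ (I : Finset ℕ) (t : ℕ) (path : ℕ → ℕ → Z2),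
    P {ω | ∀ i ∈ I, ∀ s ≤ t, Y i s ω = path i s} =
      ∏ i ∈ I, P {ω | ∀ s ≤ t, Y i s ω = path i s}

/-- Internal DLA clusters built from the walks `Y`:
`gCluster Y k = A(k+1)`, the cluster of `k+1` occupied sites; the walk `Y i`
is the walk performed by the particle producing `A(i+1)` from `A(i)`,
and `Y 0 0` is the position of the very first particle. -/
noncomputable def gCluster {Ω : Type} (Y : ℕ → ℕ → Ω → Z2) : ℕ → Ω → Finset Z2
  | 0 => fun ω => {Y 0 0 ω}
  | k + 1 => fun ω =>
      insert (Y (k + 1) (sInf {t | Y (k + 1) t ω ∉ gCluster Y k ω}) ω)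
        (gCluster Y k ω)

/-- The stopped process at level `n`: `stoppedC Y n k = S(k+1)`; particles also
stop upon reaching layer `L_n`. -/
noncomputable def stoppedC {Ω : Type} (Y : ℕ → ℕ → Ω → Z2) (n : ℕ) : ℕ → Ω → Finset Z2
  | 0 => fun _ => {origin}
  | k + 1 => fun ω =>
      insert (Y (k + 1)
          (sInf {t | Y (k + 1) t ω ∈ layer n ∨ Y (k + 1) t ω ∉ stoppedC Y n k ω}) ω)
        (stoppedC Y n k ω)

/-- The extended process at level `n`: `extC Y n i = E(i)`, starting from the full
diamond `D_n` and driven by the walks `Y (vol n + i)`. -/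
noncomputable def extC {Ω : Type} (Y : ℕ → ℕ → Ω → Z2) (n : ℕ) : ℕ → Ω → Finset Z2
  | 0 => fun _ => diamondF n
  | k + 1 => fun ω =>
      insert (Y (vol n + k) (sInf {t | Y (vol n + k) t ω ∉ extC Y n k ω}) ω)
        (extC Y n k ω)

/-- The outward directed kernel `Q_out`. -/
noncomputable def Qout (x y : Z2) : ℝ :=
  if x = origin then (if dnorm y = 1 then 1 / 4 else 0)
  else if x.1 ≠ 0 ∧ x.2 ≠ 0 then
    if y = (x.1, x.2 + x.2.sign) then
      ((x.2.natAbs : ℝ) + 1 / 2) / ((x.1.natAbs : ℝ) + (x.2.natAbs : ℝ) + 1)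
    else if y = (x.1 + x.1.sign, x.2) then
      ((x.1.natAbs : ℝ) + 1 / 2) / ((x.1.natAbs : ℝ) + (x.2.natAbs : ℝ) + 1)
    else 0
  else if x.2 = 0 then
    if y = (x.1, 1) ∨ y = (x.1, -1) then (1 / 2) / ((x.1.natAbs : ℝ) + 1)
    else if y = (x.1 + x.1.sign, 0) then (x.1.natAbs : ℝ) / ((x.1.natAbs : ℝ) + 1)
    else 0
  else
    if y = (1, x.2) ∨ y = (-1, x.2) then (1 / 2) / ((x.2.natAbs : ℝ) + 1)
    else if y = (0, x.2 + x.2.sign) then (x.2.natAbs : ℝ) / ((x.2.natAbs : ℝ) + 1)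
    else 0

/-- The inward directed kernel `Q_in`. -/
noncomputable def Qin (x y : Z2) : ℝ :=
  if x = origin then (if y = origin then 1 else 0)
  else if x.1 ≠ 0 ∧ x.2 ≠ 0 then
    if y = (x.1, x.2 - x.2.sign) then
      ((x.2.natAbs : ℝ) - 1 / 2) / ((x.1.natAbs : ℝ) + (x.2.natAbs : ℝ) - 1)
    else if y = (x.1 - x.1.sign, x.2) then
      ((x.1.natAbs : ℝ) - 1 / 2) / ((x.1.natAbs : ℝ) + (x.2.natAbs : ℝ) - 1)
    else 0
  else if x.2 = 0 then
    if y = (x.1 - x.1.sign, 0) then 1 else 0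
  else
    if y = (0, x.2 - x.2.sign) then 1 else 0

/-- The interpolating kernel `Q_p = p Q_in + (1-p) Q_out`. -/
noncomputable def Qp (p : ℝ) (x y : Z2) : ℝ := p * Qin x y + (1 - p) * Qout x y

/-- First hitting time of the set `A`, valued in `ℕ∞` (`⊤` when `A` is never visited). -/
noncomputable def hitTimeE {Ω : Type} (X : ℕ → Ω → Z2) (A : Set Z2) (ω : Ω) : ℕ∞ :=
  sInf ((fun t : ℕ => (t : ℕ∞)) '' {t | X t ω ∈ A})

/-!
Under `Q_p` the norm `‖X‖` is itself a Markov chain: from every site `Q_in` moves one layer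
inwards and `Q_out` one layer outwards, so `‖X‖` is the gambler's-ruin walk on `ℕ` that steps
down with probability `p` and up with probability `q`. The probability of reaching `o` before
`L_n` within `t` steps is a finite sum over paths, determined by the finite-dimensional laws, and
satisfies the one-step recursion of the same quantity for the walk on `ℕ` started at `ℓ`.
Continuity from below gives `P_x(τ_o < τ_n)` as the limit `t → ∞`, a function of `ℓ` that is
harmonic for `0 < ℓ < n` with boundary values `1` at `0` and `0` at `n`; the only such
function is `(S_n - S_ℓ) / S_n` with `S_k = ∑_{i<k} r^i`.
-/

lemma ENNReal.tsum_iSup_of_monotone {β : Type*} {f : ℕ → β → ℝ≥0∞}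
    (hf : ∀ b, Monotone fun t => f t b) : ∑' b, ⨆ t, f t b = ⨆ t, ∑' b, f t b := by
  simp only [ENNReal.tsum_eq_iSup_sum]
  rw [iSup_comm]
  exact iSup_congr fun s => ENNReal.finsetSum_iSup_of_monotone fun b _ _ h => hf b h

section Paths

variable {α : Type*}

noncomputable def pathWeight (κ : α → α → ℝ≥0∞) (t : ℕ) (γ : ℕ → α) : ℝ≥0∞ :=
  ∏ s ∈ Finset.range t, κ (γ s) (γ (s + 1))

-- The path `y, h 0, …, h (t - 1)`, frozen at its last point after time `t`.
def pathFrom {t : ℕ} (y : α) (h : Fin t → α) : ℕ → α :=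
  fun s => (Fin.cons y h : Fin (t + 1) → α) (Fin.clamp s t)

def HitsBeforeBy (A B : Set α) (t : ℕ) (γ : ℕ → α) : Prop :=
  ∃ u ≤ t, γ u ∈ A ∧ ∀ s ≤ u, γ s ∉ B

noncomputable def hitBeforeProb (κ : α → α → ℝ≥0∞) (A B : Set α) : ℕ → α → ℝ≥0∞
  | 0, y => if y ∈ B then 0 else if y ∈ A then 1 else 0
  | t + 1, y => if y ∈ B then 0 else if y ∈ A then 1 else ∑' z, κ y z * hitBeforeProb κ A B t z

variable {κ : α → α → ℝ≥0∞} {A B : Set α} {t : ℕ}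

@[simp] lemma pathFrom_zero (y : α) (h : Fin t → α) : pathFrom y h 0 = y := rfl

lemma pathFrom_cons_succ (y z : α) (h : Fin t → α) :
    (fun s => pathFrom y (Fin.cons z h : Fin (t + 1) → α) (s + 1)) = pathFrom z h := by
  funext s
  simp only [pathFrom, Fin.clamp]
  have : (⟨min (s + 1) (t + 1), by omega⟩ : Fin (t + 2)) = Fin.succ ⟨min s t, by omega⟩ := by
    ext; simp
  rw [this, Fin.cons_succ]

@[simp] lemma pathFrom_cons_one (y z : α) (h : Fin t → α) :
    pathFrom y (Fin.cons z h : Fin (t + 1) → α) 1 = z :=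
  congrFun (pathFrom_cons_succ y z h) 0

lemma pathFrom_of_le (γ : ℕ → α) {s : ℕ} (hs : s ≤ t) :
    pathFrom (γ 0) (fun i : Fin t => γ ((i : ℕ) + 1)) s = γ s := by
  cases s with
  | zero => rfl
  | succ s =>
    simp only [pathFrom, Fin.clamp, Nat.min_eq_left hs]
    exact Fin.cons_succ (α := fun _ => α) _ _ ⟨s, by omega⟩

lemma pathWeight_succ (γ : ℕ → α) :
    pathWeight κ (t + 1) γ = κ (γ 0) (γ 1) * pathWeight κ t (fun s => γ (s + 1)) :=
  Finset.prod_range_succ' _ _ |>.trans (mul_comm _ _)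

lemma hitsBeforeBy_zero (γ : ℕ → α) : HitsBeforeBy A B 0 γ ↔ γ 0 ∉ B ∧ γ 0 ∈ A := by
  simp [HitsBeforeBy, and_comm]

lemma hitsBeforeBy_succ (γ : ℕ → α) :
    HitsBeforeBy A B (t + 1) γ ↔
      γ 0 ∉ B ∧ (γ 0 ∈ A ∨ HitsBeforeBy A B t (fun s => γ (s + 1))) := by
  constructor
  · rintro ⟨_ | u, hu, hA, hB⟩
    · exact ⟨hB 0 le_rfl, Or.inl hA⟩
    · exact ⟨hB 0 (Nat.zero_le _), Or.inr ⟨u, by omega, hA, fun s hs => hB (s + 1) (by omega)⟩⟩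
  · rintro ⟨h0, hA | ⟨u, hu, hA, hB⟩⟩
    · exact ⟨0, Nat.zero_le _, hA, fun s hs => by rwa [Nat.le_zero.1 hs]⟩
    · refine ⟨u + 1, by omega, hA, fun s hs => ?_⟩
      cases s with
      | zero => exact h0
      | succ s => exact hB s (by omega)

lemma HitsBeforeBy.mono {γ : ℕ → α} {t' : ℕ} (htt' : t ≤ t')
    (h : HitsBeforeBy A B t γ) : HitsBeforeBy A B t' γ :=
  let ⟨u, hu, hA, hB⟩ := h
  ⟨u, hu.trans htt', hA, hB⟩

lemma hitsBeforeBy_congr {γ γ' : ℕ → α}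
    (h : ∀ s ≤ t, γ s = γ' s) : HitsBeforeBy A B t γ ↔ HitsBeforeBy A B t γ' := by
  refine exists_congr fun u => and_congr_right fun hu => ?_
  rw [h u hu]
  exact and_congr_right fun _ => forall₂_congr fun s hs => by rw [h s (hs.trans hu)]

lemma tsum_fun_fin_succ (G : (Fin (t + 1) → α) → ℝ≥0∞) :
    ∑' h, G h = ∑' z, ∑' h : Fin t → α, G (Fin.cons z h) := by
  rw [← (Fin.consEquiv fun _ => α).tsum_eq, ENNReal.tsum_prod']
  rfl

lemma tsum_pathWeight_pathFrom (hκ : ∀ y, ∑' z, κ y z = 1) (t : ℕ) (y : α) :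
    ∑' h : Fin t → α, pathWeight κ t (pathFrom y h) = 1 := by
  induction t generalizing y with
  | zero => simp [pathWeight]
  | succ t ih =>
    simp only [tsum_fun_fin_succ, pathWeight_succ, pathFrom_zero, pathFrom_cons_one,
      pathFrom_cons_succ, ENNReal.tsum_mul_left, ih, mul_one, hκ]

lemma tsum_pathWeight_hitsBeforeBy (hκ : ∀ y, ∑' z, κ y z = 1) (t : ℕ) (y : α) :
    ∑' h : Fin t → α, (if HitsBeforeBy A B t (pathFrom y h) then
      pathWeight κ t (pathFrom y h) else 0) = hitBeforeProb κ A B t y := by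
  induction t generalizing y with
  | zero =>
    by_cases hB : y ∈ B <;> by_cases hA : y ∈ A <;>
      simp [hitsBeforeBy_zero, hitBeforeProb, pathWeight, hA, hB]
  | succ t ih =>
    simp only [tsum_fun_fin_succ, hitsBeforeBy_succ, pathWeight_succ, pathFrom_zero,
      pathFrom_cons_one, pathFrom_cons_succ, hitBeforeProb]
    by_cases hB : y ∈ B
    · simp [hB]
    by_cases hA : y ∈ A
    · simp only [hA, hB, not_false_eq_true, true_or, and_self, if_true, if_false,
        ENNReal.tsum_mul_left, tsum_pathWeight_pathFrom hκ, mul_one, hκ]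
    · simp only [hA, hB, not_false_eq_true, false_or, true_and, if_false, ← ih,
        ← ENNReal.tsum_mul_left, mul_ite, mul_zero]

lemma hitBeforeProb_le_succ (t : ℕ) (y : α) :
    hitBeforeProb κ A B t y ≤ hitBeforeProb κ A B (t + 1) y := by
  induction t generalizing y with
  | zero => simp only [hitBeforeProb]; split_ifs <;> simp
  | succ t ih =>
    rw [hitBeforeProb, hitBeforeProb]
    split_ifs
    · exact le_rfl
    · exact le_rfl
    · exact ENNReal.tsum_le_tsum fun z => mul_le_mul_right (ih z) _

lemma monotone_hitBeforeProb (y : α) : Monotone fun t => hitBeforeProb κ A B t y :=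
  monotone_nat_of_le_succ fun t => hitBeforeProb_le_succ t y

lemma hitBeforeProb_le_one (hκ : ∀ y, ∑' z, κ y z ≤ 1) (t : ℕ) (y : α) :
    hitBeforeProb κ A B t y ≤ 1 := by
  induction t generalizing y with
  | zero => simp only [hitBeforeProb]; split_ifs <;> simp
  | succ t ih =>
    rw [hitBeforeProb]
    split_ifs
    · exact zero_le_one
    · exact le_rfl
    · calc ∑' z, κ y z * hitBeforeProb κ A B t z ≤ ∑' z, κ y z * 1 :=
            ENNReal.tsum_le_tsum fun z => mul_le_mul_right (ih z) _
        _ ≤ 1 := by simpa using hκ y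

lemma iSup_hitBeforeProb_of_notMem {y : α} (hA : y ∉ A) (hB : y ∉ B) :
    ⨆ t, hitBeforeProb κ A B t y = ∑' z, κ y z * ⨆ t, hitBeforeProb κ A B t z := by
  simp only [ENNReal.mul_iSup]
  rw [ENNReal.tsum_iSup_of_monotone (f := fun t z => κ y z * hitBeforeProb κ A B t z)
    fun z _ _ h => mul_le_mul_right (monotone_hitBeforeProb z h) _,
    ← (monotone_hitBeforeProb y).iSup_nat_add 1]
  simp [hitBeforeProb, hA, hB]

lemma hitBeforeProb_comp {β : Type*} {η : β → β → ℝ≥0∞} {π : α → β} {A' B' : Set β}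
    (hπ : ∀ y (c : β → ℝ≥0∞), ∑' z, κ y z * c (π z) = ∑' j, η (π y) j * c j) (t : ℕ) (y : α) :
    hitBeforeProb κ (π ⁻¹' A') (π ⁻¹' B') t y = hitBeforeProb η A' B' t (π y) := by
  induction t generalizing y with
  | zero => simp [hitBeforeProb]
  | succ t ih => simp only [hitBeforeProb, Set.mem_preimage, ih, hπ]

end Paths

section HittingTimes

variable {Ω : Type} (X : ℕ → Ω → Z2) (ω : Ω)

lemma hitTimeE_lt_iff (A : Set Z2) (b : ℕ∞) :
    hitTimeE X A ω < b ↔ ∃ u, X u ω ∈ A ∧ (u : ℕ∞) < b := by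
  simp [hitTimeE, sInf_lt_iff]

lemma natCast_lt_hitTimeE_iff (B : Set Z2) (u : ℕ) :
    (u : ℕ∞) < hitTimeE X B ω ↔ ∀ s ≤ u, X s ω ∉ B := by
  rw [← ENat.add_one_le_iff (ENat.natCast_ne_top u), hitTimeE, le_sInf_iff]
  simp only [Set.mem_image, Set.mem_ofPred_eq, forall_exists_index, and_imp,
    forall_apply_eq_imp_iff₂]
  refine forall_congr' fun s => ⟨fun h hs hB => ?_, fun h hB => ?_⟩
  · have := h hB; norm_cast at this; omega
  · exact_mod_cast Nat.succ_le_of_lt (not_le.1 fun hs => h hs hB)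

lemma hitTimeE_lt_hitTimeE_iff (A B : Set Z2) :
    hitTimeE X A ω < hitTimeE X B ω ↔ ∃ t, HitsBeforeBy A B t fun s => X s ω := by
  simp only [hitTimeE_lt_iff, natCast_lt_hitTimeE_iff, HitsBeforeBy]
  exact ⟨fun ⟨u, h⟩ => ⟨u, u, le_rfl, h⟩, fun ⟨_, u, _, h⟩ => ⟨u, h⟩⟩

end HittingTimes

section WalkLaw

variable {Ω : Type} [MeasurableSpace Ω] {P : Measure Ω} {X : ℕ → Ω → Z2} {Q : Z2 → Z2 → ℝ}
  {x : Z2}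

lemma measure_cylinder (hQ : ∀ y z, 0 ≤ Q y z) (hX : IsWalkFrom P X Q x) (t : ℕ)
    (γ : ℕ → Z2) :
    P {ω | ∀ s ≤ t, X s ω = γ s} =
      if γ 0 = x then pathWeight (fun y z => ENNReal.ofReal (Q y z)) t γ else 0 := by
  rw [hX, pathWeight, ← ENNReal.ofReal_prod_of_nonneg fun s _ => hQ _ _]
  split_ifs <;> simp

lemma measure_setOf_le_tsum (hQ : ∀ y z, 0 ≤ Q y z) (hX : IsWalkFrom P X Q x) {t : ℕ}
    (S : (ℕ → Z2) → Prop) (hS : ∀ γ γ' : ℕ → Z2, (∀ s ≤ t, γ s = γ' s) → (S γ ↔ S γ')) :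
    P {ω | S fun s => X s ω} ≤ ∑' h : Fin t → Z2,
      if S (pathFrom x h) then pathWeight (fun y z => ENNReal.ofReal (Q y z)) t (pathFrom x h)
      else 0 := by
  set cyl : Z2 × (Fin t → Z2) → Set Ω := fun g =>
    {ω | S (pathFrom g.1 g.2) ∧ ∀ s ≤ t, X s ω = pathFrom g.1 g.2 s}
  have hcover : {ω | S fun s => X s ω} ⊆ ⋃ g, cyl g := fun ω hω =>
    have hpath := fun s (hs : s ≤ t) => (pathFrom_of_le (fun s => X s ω) hs).symm
    Set.mem_iUnion.2 ⟨(X 0 ω, fun i => X (i + 1) ω), (hS _ _ hpath).1 hω, hpath⟩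
  have hcyl : ∀ y h, P (cyl (y, h)) ≤ if y = x then
      (if S (pathFrom x h) then pathWeight (fun y z => ENNReal.ofReal (Q y z)) t (pathFrom x h)
      else 0) else 0 := by
    intro y h
    by_cases hSy : S (pathFrom y h)
    · refine (measure_mono fun ω hω => hω.2).trans (measure_cylinder hQ hX t _ |>.trans_le ?_)
      by_cases hy : y = x
      · subst hy; simp [hSy]
      · simp [hy]
    · simp [cyl, hSy]
  calc P {ω | S fun s => X s ω} ≤ ∑' g, P (cyl g) :=
        (measure_mono hcover).trans (measure_iUnion_le _)
    _ ≤ _ := ENNReal.tsum_prod'.trans_le (ENNReal.tsum_le_tsum fun y =>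
        ENNReal.tsum_le_tsum fun h => hcyl y h)
    _ = _ := by rw [tsum_eq_single x fun y hy => by simp [hy]]; simp

lemma measure_setOf_eq_tsum [IsProbabilityMeasure P] (hQ : ∀ y z, 0 ≤ Q y z)
    (hQ1 : ∀ y, ∑' z, ENNReal.ofReal (Q y z) = 1) (hX : IsWalkFrom P X Q x) {t : ℕ}
    (S : (ℕ → Z2) → Prop) (hS : ∀ γ γ' : ℕ → Z2, (∀ s ≤ t, γ s = γ' s) → (S γ ↔ S γ')) :
    P {ω | S fun s => X s ω} = ∑' h : Fin t → Z2,
      if S (pathFrom x h) then pathWeight (fun y z => ENNReal.ofReal (Q y z)) t (pathFrom x h)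
      else 0 := by
  set w := fun h : Fin t → Z2 => pathWeight (fun y z => ENNReal.ofReal (Q y z)) t (pathFrom x h)
  have hcompl : P {ω | ¬S fun s => X s ω} ≤ ∑' h, if ¬S (pathFrom x h) then w h else 0 := by
    convert measure_setOf_le_tsum hQ hX (fun γ => ¬S γ) fun γ γ' h => not_congr (hS γ γ' h)
  -- `X` need not be measurable, so the lower bound comes from the upper bound for the
  -- complementary event: the two path sums add up to `1` while the two events cover `Ω`.
  have hsum : (∑' h, if S (pathFrom x h) then w h else 0) +
      ∑' h, (if ¬S (pathFrom x h) then w h else 0) = 1 := by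
    rw [← ENNReal.tsum_add]
    simpa only [ite_add_ite, add_zero, zero_add, ite_not, ite_self] using
      tsum_pathWeight_pathFrom hQ1 t x
  have hcover : 1 ≤ P {ω | S fun s => X s ω} + P {ω | ¬S fun s => X s ω} :=
    calc 1 = P Set.univ := measure_univ.symm
      _ ≤ P ({ω | S fun s => X s ω} ∪ {ω | ¬S fun s => X s ω}) :=
        measure_mono fun ω _ => em _
      _ ≤ _ := measure_union_le _ _
  have hfin : (∑' h, if ¬S (pathFrom x h) then w h else 0) ≠ ⊤ :=
    ne_top_of_le_ne_top ENNReal.one_ne_top (hsum ▸ le_add_self)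
  refine le_antisymm (measure_setOf_le_tsum hQ hX S hS)
    ((ENNReal.add_le_add_iff_right hfin).1 ?_)
  exact hsum.trans_le (hcover.trans (add_le_add_right hcompl _))

theorem measure_hitTimeE_lt_hitTimeE [IsProbabilityMeasure P] (hQ : ∀ y z, 0 ≤ Q y z)
    (hQ1 : ∀ y, ∑' z, ENNReal.ofReal (Q y z) = 1) (hX : IsWalkFrom P X Q x) (A B : Set Z2) :
    P {ω | hitTimeE X A ω < hitTimeE X B ω} =
      ⨆ t, hitBeforeProb (fun y z => ENNReal.ofReal (Q y z)) A B t x := by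
  have hunion : {ω | hitTimeE X A ω < hitTimeE X B ω} =
      ⋃ t, {ω | HitsBeforeBy A B t fun s => X s ω} := by
    ext ω
    simp only [Set.mem_iUnion, Set.mem_ofPred_eq, hitTimeE_lt_hitTimeE_iff]
  rw [hunion, Monotone.measure_iUnion fun t t' htt' ω => HitsBeforeBy.mono htt']
  refine iSup_congr fun t => ?_
  rw [measure_setOf_eq_tsum hQ hQ1 hX _ fun γ γ' => hitsBeforeBy_congr,
    tsum_pathWeight_hitsBeforeBy hQ1]

end WalkLaw

section Kernels

lemma tsum_ofReal_mul_comp_dnorm {f : Z2 → ℝ} {m : ℕ} (s : Finset Z2) (hf : ∀ z, 0 ≤ f z)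
    (hs : ∀ z ∉ s, f z = 0) (hm : ∀ z ∈ s, dnorm z = m) (h1 : ∑ z ∈ s, f z = 1)
    (c : ℕ → ℝ≥0∞) : ∑' z, ENNReal.ofReal (f z) * c (dnorm z) = c m := by
  rw [tsum_eq_sum fun z hz => by simp [hs z hz], Finset.sum_congr rfl fun z hz => by rw [hm z hz],
    ← Finset.sum_mul, ← ENNReal.ofReal_sum_of_nonneg fun z _ => hf z, h1, ENNReal.ofReal_one,
    one_mul]

lemma Int.natAbs_add_sign {a : ℤ} (h : a ≠ 0) : (a + a.sign).natAbs = a.natAbs + 1 := by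
  rcases h.lt_or_gt with h | h
  · rw [Int.sign_eq_neg_one_of_neg h]; omega
  · rw [Int.sign_eq_one_of_pos h]; omega

lemma Int.natAbs_sub_sign {a : ℤ} (h : a ≠ 0) : (a - a.sign).natAbs = a.natAbs - 1 := by
  rcases h.lt_or_gt with h | h
  · rw [Int.sign_eq_neg_one_of_neg h]; omega
  · rw [Int.sign_eq_one_of_pos h]; omega

lemma Qin_nonneg (x y : Z2) : 0 ≤ Qin x y := by
  unfold Qin
  by_cases hx : x.1 ≠ 0 ∧ x.2 ≠ 0
  · have h1 : (1 : ℝ) ≤ x.1.natAbs := by exact_mod_cast Int.natAbs_pos.2 hx.1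
    have h2 : (1 : ℝ) ≤ x.2.natAbs := by exact_mod_cast Int.natAbs_pos.2 hx.2
    split_ifs <;> first | positivity | (apply div_nonneg <;> linarith)
  · split_ifs <;> positivity

lemma Qout_nonneg (x y : Z2) : 0 ≤ Qout x y := by
  unfold Qout
  split_ifs <;> positivity

lemma tsum_Qin_mul_comp_dnorm_of_ne_zero {y : Z2} (h12 : y.1 ≠ 0 ∧ y.2 ≠ 0)
    (c : ℕ → ℝ≥0∞) : ∑' z, ENNReal.ofReal (Qin y z) * c (dnorm z) = c (dnorm y - 1) := by
  have h0 : y ≠ origin := fun h => h12.1 (by simp [h, origin])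
  have h1 : (1 : ℝ) ≤ y.1.natAbs := by exact_mod_cast Int.natAbs_pos.2 h12.1
  have h2 : (1 : ℝ) ≤ y.2.natAbs := by exact_mod_cast Int.natAbs_pos.2 h12.2
  have hne : ((y.1, y.2 - y.2.sign) : Z2) ≠ (y.1 - y.1.sign, y.2) := by
    simp [Prod.ext_iff, Int.sign_eq_zero_iff_zero, h12.2]
  refine tsum_ofReal_mul_comp_dnorm {(y.1, y.2 - y.2.sign), (y.1 - y.1.sign, y.2)}
    (Qin_nonneg _) (fun z hz => ?_) (fun z hz => ?_) ?_ c
  · simp only [Finset.mem_insert, Finset.mem_singleton, not_or] at hz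
    simp [Qin, h0, h12, hz.1, hz.2]
  · simp only [Finset.mem_insert, Finset.mem_singleton] at hz
    rcases hz with rfl | rfl <;> simp [dnorm, Int.natAbs_sub_sign, h12.1, h12.2] <;> omega
  · rw [Finset.sum_pair hne, Qin, Qin, if_neg h0, if_neg h0, if_pos h12, if_pos h12, if_pos rfl,
      if_neg hne.symm, if_pos rfl, ← add_div, div_eq_one_iff_eq (by linarith)]
    ring

lemma tsum_Qin_mul_comp_dnorm (y : Z2) (c : ℕ → ℝ≥0∞) :
    ∑' z, ENNReal.ofReal (Qin y z) * c (dnorm z) = c (dnorm y - 1) := by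
  by_cases h0 : y = origin
  · subst h0
    refine tsum_ofReal_mul_comp_dnorm {origin} (Qin_nonneg _) (fun z hz => ?_)
      (fun z hz => ?_) ?_ c
    · simp_all [Qin]
    · simp_all [dnorm, origin]
    · simp [Qin]
  by_cases h12 : y.1 ≠ 0 ∧ y.2 ≠ 0
  · exact tsum_Qin_mul_comp_dnorm_of_ne_zero h12 c
  by_cases h2 : y.2 = 0
  · have h1 : y.1 ≠ 0 := fun h1 => h0 (Prod.ext h1 h2)
    refine tsum_ofReal_mul_comp_dnorm {(y.1 - y.1.sign, 0)} (Qin_nonneg _) (fun z hz => ?_)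
      (fun z hz => ?_) ?_ c
    · rw [Qin, if_neg h0, if_neg h12, if_pos h2, if_neg (Finset.mem_singleton.not.1 hz)]
    · rw [Finset.mem_singleton.1 hz]
      simp [dnorm, Int.natAbs_sub_sign h1, h2]
    · simp [Qin, h0, h2]
  · have h1 : y.1 = 0 := by tauto
    refine tsum_ofReal_mul_comp_dnorm {(0, y.2 - y.2.sign)} (Qin_nonneg _) (fun z hz => ?_)
      (fun z hz => ?_) ?_ c
    · rw [Qin, if_neg h0, if_neg h12, if_neg h2, if_neg (Finset.mem_singleton.not.1 hz)]
    · rw [Finset.mem_singleton.1 hz]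
      simp [dnorm, Int.natAbs_sub_sign h2, h1]
    · simp [Qin, h0, h1, h2]

lemma tsum_Qout_mul_comp_dnorm_of_mem_axes {y : Z2} (h0 : y ≠ origin)
    (h12 : ¬(y.1 ≠ 0 ∧ y.2 ≠ 0)) (c : ℕ → ℝ≥0∞) :
    ∑' z, ENNReal.ofReal (Qout y z) * c (dnorm z) = c (dnorm y + 1) := by
  by_cases h2 : y.2 = 0
  · have h1 : y.1 ≠ 0 := fun h1 => h0 (Prod.ext h1 h2)
    refine tsum_ofReal_mul_comp_dnorm {(y.1, 1), (y.1, -1), (y.1 + y.1.sign, 0)} (Qout_nonneg _)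
      (fun z hz => ?_) (fun z hz => ?_) ?_ c
    · simp only [Finset.mem_insert, Finset.mem_singleton, not_or] at hz
      rw [Qout, if_neg h0, if_neg h12, if_pos h2, if_neg (by tauto), if_neg hz.2.2]
    · simp only [Finset.mem_insert, Finset.mem_singleton] at hz
      rcases hz with rfl | rfl | rfl <;> simp [dnorm, Int.natAbs_add_sign h1, h2]
    · have hne :
          ¬((y.1 + y.1.sign, (0 : ℤ)) = (y.1, 1) ∨ (y.1 + y.1.sign, (0 : ℤ)) = (y.1, -1)) := by
        simp
      rw [Finset.sum_insert (by simp), Finset.sum_insert (by simp [Int.sign_eq_zero_iff_zero, h1]),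
        Finset.sum_singleton]
      simp only [Qout, if_neg h0, if_neg h12, if_pos h2, if_neg hne, true_or, or_true, if_true]
      field_simp
      ring
  · have h1 : y.1 = 0 := by tauto
    refine tsum_ofReal_mul_comp_dnorm {(1, y.2), (-1, y.2), (0, y.2 + y.2.sign)} (Qout_nonneg _)
      (fun z hz => ?_) (fun z hz => ?_) ?_ c
    · simp only [Finset.mem_insert, Finset.mem_singleton, not_or] at hz
      rw [Qout, if_neg h0, if_neg h12, if_neg h2, if_neg (by tauto), if_neg hz.2.2]
    · simp only [Finset.mem_insert, Finset.mem_singleton] at hz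
      rcases hz with rfl | rfl | rfl <;> simp [dnorm, Int.natAbs_add_sign h2, h1, add_comm]
    · have hne :
          ¬(((0 : ℤ), y.2 + y.2.sign) = (1, y.2) ∨ ((0 : ℤ), y.2 + y.2.sign) = (-1, y.2)) := by
        simp
      rw [Finset.sum_insert (by simp), Finset.sum_insert (by simp), Finset.sum_singleton]
      simp only [Qout, if_neg h0, if_neg h12, if_neg h2, if_neg hne, true_or, or_true, if_true]
      field_simp
      ring

lemma tsum_Qout_mul_comp_dnorm (y : Z2) (c : ℕ → ℝ≥0∞) :
    ∑' z, ENNReal.ofReal (Qout y z) * c (dnorm z) = c (dnorm y + 1) := by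
  by_cases h0 : y = origin
  · subst h0
    have hs : ∀ z : Z2, dnorm z = 1 ↔ z ∈ ({(1, 0), (-1, 0), (0, 1), (0, -1)} : Finset Z2) := by
      intro z
      simp only [dnorm, Finset.mem_insert, Finset.mem_singleton, Prod.ext_iff]
      omega
    refine tsum_ofReal_mul_comp_dnorm _ (Qout_nonneg _) (fun z hz => ?_)
      (fun z hz => (hs z).2 hz) ?_ c
    · simp [Qout, mt (hs z).1 hz]
    · simp [Qout, dnorm]
      norm_num
  by_cases h12 : y.1 ≠ 0 ∧ y.2 ≠ 0
  · have hne : ((y.1, y.2 + y.2.sign) : Z2) ≠ (y.1 + y.1.sign, y.2) := by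
      simp [Prod.ext_iff, Int.sign_eq_zero_iff_zero, h12.2]
    refine tsum_ofReal_mul_comp_dnorm {(y.1, y.2 + y.2.sign), (y.1 + y.1.sign, y.2)}
      (Qout_nonneg _) (fun z hz => ?_) (fun z hz => ?_) ?_ c
    · simp only [Finset.mem_insert, Finset.mem_singleton, not_or] at hz
      rw [Qout, if_neg h0, if_pos h12, if_neg hz.1, if_neg hz.2]
    · simp only [Finset.mem_insert, Finset.mem_singleton] at hz
      rcases hz with rfl | rfl <;> simp [dnorm, Int.natAbs_add_sign, h12.1, h12.2] <;> omega
    · rw [Finset.sum_pair hne, Qout, Qout, if_neg h0, if_neg h0, if_pos h12, if_pos h12, if_pos rfl,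
        if_neg hne.symm, if_pos rfl, ← add_div, div_eq_one_iff_eq (by positivity)]
      ring
  exact tsum_Qout_mul_comp_dnorm_of_mem_axes h0 h12 c

end Kernels

-- At `k = 0` the truncated `k - 1 = 0` matches `Q_in(o, o) = 1`, so `dnorm` maps `Q_p` onto
-- this kernel from every site, the origin included.
noncomputable def ruinKernel (p : ℝ) (k j : ℕ) : ℝ≥0∞ :=
  (if j = k - 1 then ENNReal.ofReal p else 0) + if j = k + 1 then ENNReal.ofReal (1 - p) else 0

section Radial

variable {p : ℝ}

lemma tsum_ruinKernel_mul (k : ℕ) (c : ℕ → ℝ≥0∞) :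
    ∑' j, ruinKernel p k j * c j =
      ENNReal.ofReal p * c (k - 1) + ENNReal.ofReal (1 - p) * c (k + 1) := by
  simp only [ruinKernel, add_mul, ite_mul, zero_mul]
  rw [ENNReal.tsum_add, tsum_ite_eq, tsum_ite_eq]

lemma tsum_ruinKernel (hp0 : 0 ≤ p) (hp1 : p ≤ 1) (k : ℕ) : ∑' j, ruinKernel p k j = 1 := by
  simpa [← ENNReal.ofReal_add hp0 (sub_nonneg.2 hp1)] using tsum_ruinKernel_mul (p := p) k 1

lemma Qp_nonneg (hp0 : 0 ≤ p) (hp1 : p ≤ 1) (x y : Z2) : 0 ≤ Qp p x y :=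
  add_nonneg (mul_nonneg hp0 (Qin_nonneg x y)) (mul_nonneg (sub_nonneg.2 hp1) (Qout_nonneg x y))

lemma tsum_Qp_mul_comp_dnorm (hp0 : 0 ≤ p) (hp1 : p ≤ 1) (y : Z2) (c : ℕ → ℝ≥0∞) :
    ∑' z, ENNReal.ofReal (Qp p y z) * c (dnorm z) = ∑' j, ruinKernel p (dnorm y) j * c j := by
  have hq : 0 ≤ 1 - p := sub_nonneg.2 hp1
  simp only [Qp, ENNReal.ofReal_add (mul_nonneg hp0 (Qin_nonneg _ _))
    (mul_nonneg hq (Qout_nonneg _ _)), ENNReal.ofReal_mul hp0, ENNReal.ofReal_mul hq, add_mul,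
    mul_assoc]
  rw [ENNReal.tsum_add, ENNReal.tsum_mul_left, ENNReal.tsum_mul_left, tsum_Qin_mul_comp_dnorm,
    tsum_Qout_mul_comp_dnorm, tsum_ruinKernel_mul]

lemma tsum_Qp (hp0 : 0 ≤ p) (hp1 : p ≤ 1) (y : Z2) : ∑' z, ENNReal.ofReal (Qp p y z) = 1 := by
  simpa [tsum_ruinKernel hp0 hp1] using tsum_Qp_mul_comp_dnorm hp0 hp1 y 1

lemma hitBeforeProb_Qp (hp0 : 0 ≤ p) (hp1 : p ≤ 1) (n t : ℕ) (y : Z2) :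
    hitBeforeProb (fun y z => ENNReal.ofReal (Qp p y z)) {origin} (layer n) t y =
      hitBeforeProb (ruinKernel p) {0} {n} t (dnorm y) := by
  have horigin : {origin} = dnorm ⁻¹' {0} := by
    ext z; simp [dnorm, origin, Prod.ext_iff]
  rw [horigin]
  exact hitBeforeProb_comp (B' := {n}) (tsum_Qp_mul_comp_dnorm hp0 hp1) t y

end Radial

section GamblersRuin

open Finset

variable {p : ℝ} {n : ℕ}

lemma eq_add_mul_geom_sum_of_harmonic (hp : p ≠ 1) {v : ℕ → ℝ}
    (hv : ∀ k, 0 < k → k < n → v k = p * v (k - 1) + (1 - p) * v (k + 1)) :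
    ∀ k ≤ n, v k = v 0 + (v 1 - v 0) * ∑ i ∈ range k, (p / (1 - p)) ^ i := by
  have hdiff : ∀ k < n, v (k + 1) - v k = (p / (1 - p)) ^ k * (v 1 - v 0) := by
    intro k hk
    induction k with
    | zero => simp
    | succ k ih =>
      have h := hv (k + 1) (Nat.succ_pos k) hk
      rw [Nat.add_sub_cancel] at h
      rw [pow_succ, mul_comm _ (p / (1 - p)), mul_assoc, ← ih (by omega)]
      field_simp
      linear_combination (-1 : ℝ) * h
  intro k hk
  rw [mul_comm, sum_mul, ← sum_congr rfl fun i hi => hdiff i (by simp at hi; omega),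
    sum_range_sub (fun i => v i)]
  ring

lemma one_le_geom_sum (hp0 : 0 ≤ p) (hp1 : p < 1) (hn : n ≠ 0) :
    1 ≤ ∑ i ∈ range n, (p / (1 - p)) ^ i := by
  have hr : 0 ≤ p / (1 - p) := div_nonneg hp0 (by linarith)
  calc (1 : ℝ) = (p / (1 - p)) ^ 0 := (pow_zero _).symm
    _ ≤ _ := single_le_sum (fun i _ => pow_nonneg hr i) (mem_range.2 (Nat.pos_of_ne_zero hn))

lemma eq_gamblersRuin_of_harmonic (hp0 : 0 ≤ p) (hp1 : p < 1) (hn : n ≠ 0) {v : ℕ → ℝ}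
    (h0 : v 0 = 1) (hvn : v n = 0)
    (hv : ∀ k, 0 < k → k < n → v k = p * v (k - 1) + (1 - p) * v (k + 1)) {k : ℕ} (hk : k ≤ n) :
    v k = (∑ i ∈ range n, (p / (1 - p)) ^ i - ∑ i ∈ range k, (p / (1 - p)) ^ i) /
      ∑ i ∈ range n, (p / (1 - p)) ^ i := by
  have hS := (one_le_geom_sum hp0 hp1 hn).trans_lt' one_pos |>.ne'
  have hvk := eq_add_mul_geom_sum_of_harmonic hp1.ne hv k hk
  have hvn' := eq_add_mul_geom_sum_of_harmonic hp1.ne hv n le_rfl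
  rw [h0, hvn] at *
  field_simp
  linear_combination
    hvk * ∑ i ∈ range n, (p / (1 - p)) ^ i - hvn' * ∑ i ∈ range k, (p / (1 - p)) ^ i

lemma iSup_hitBeforeProb_ruinKernel (hp0 : 0 ≤ p) (hp1 : p < 1) (hn : n ≠ 0) {k : ℕ}
    (hk : k ≤ n) :
    ⨆ t, hitBeforeProb (ruinKernel p) {0} {n} t k =
      ENNReal.ofReal ((∑ i ∈ range n, (p / (1 - p)) ^ i - ∑ i ∈ range k, (p / (1 - p)) ^ i) /
        ∑ i ∈ range n, (p / (1 - p)) ^ i) := by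
  set u := fun k => ⨆ t, hitBeforeProb (ruinKernel p) {0} {n} t k
  have hfin : ∀ k, u k ≠ ⊤ := fun k => ne_top_of_le_ne_top ENNReal.one_ne_top
    (iSup_le fun t => hitBeforeProb_le_one (fun j => (tsum_ruinKernel hp0 hp1.le j).le) t k)
  have h0 : (u 0).toReal = 1 := by
    have : ∀ t, hitBeforeProb (ruinKernel p) {0} {n} t 0 = 1 := by
      rintro (_ | t) <;> simp [hitBeforeProb, Ne.symm hn]
    simp [u, this]
  have hvn : (u n).toReal = 0 := by
    have : ∀ t, hitBeforeProb (ruinKernel p) {0} {n} t n = 0 := by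
      rintro (_ | t) <;> simp [hitBeforeProb]
    simp [u, this]
  have hv : ∀ k, 0 < k → k < n →
      (u k).toReal = p * (u (k - 1)).toReal + (1 - p) * (u (k + 1)).toReal := by
    intro k hk0 hkn
    simp only [u]
    rw [iSup_hitBeforeProb_of_notMem (by simpa using hk0.ne') (by simpa using hkn.ne),
      tsum_ruinKernel_mul, ENNReal.toReal_add (ENNReal.mul_ne_top ENNReal.ofReal_ne_top (hfin _))
        (ENNReal.mul_ne_top ENNReal.ofReal_ne_top (hfin _)), ENNReal.toReal_mul, ENNReal.toReal_mul,
      ENNReal.toReal_ofReal hp0, ENNReal.toReal_ofReal (by linarith)]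
  change u k = _
  rw [← ENNReal.ofReal_toReal (hfin k), eq_gamblersRuin_of_harmonic hp0 hp1 hn h0 hvn hv hk]

end GamblersRuin

theorem statement6_general
    (p : ℝ) (hp : p ∈ Set.Ico (0 : ℝ) 1)
    {Ω : Type} [MeasurableSpace Ω] (P : Measure Ω) [IsProbabilityMeasure P]
    (ℓ n : ℕ) (hn : ℓ < n)
    (x : Z2) (hx : dnorm x = ℓ)
    (X : ℕ → Ω → Z2) (hwalk : IsWalkFrom P X (Qp p) x) :
    (p ≠ 1 - p →
      P {ω | hitTimeE X {origin} ω < hitTimeE X (layer n) ω}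
        = ENNReal.ofReal (((p / (1 - p)) ^ n - (p / (1 - p)) ^ ℓ) / ((p / (1 - p)) ^ n - 1))) ∧
    (p = 1 / 2 →
      P {ω | hitTimeE X {origin} ω < hitTimeE X (layer n) ω}
        = ENNReal.ofReal (((n : ℝ) - (ℓ : ℝ)) / (n : ℝ))) := by
  obtain ⟨hp0, hp1⟩ := hp
  have hprob : P {ω | hitTimeE X {origin} ω < hitTimeE X (layer n) ω} =
      ENNReal.ofReal ((∑ i ∈ Finset.range n, (p / (1 - p)) ^ i -
        ∑ i ∈ Finset.range ℓ, (p / (1 - p)) ^ i) / ∑ i ∈ Finset.range n, (p / (1 - p)) ^ i) := by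
    rw [measure_hitTimeE_lt_hitTimeE (Qp_nonneg hp0 hp1.le) (tsum_Qp hp0 hp1.le) hwalk]
    simp only [hitBeforeProb_Qp hp0 hp1.le, hx]
    exact iSup_hitBeforeProb_ruinKernel hp0 hp1 (by omega) hn.le
  refine ⟨fun hpq => ?_, fun hhalf => ?_⟩
  · have hr : p / (1 - p) ≠ 1 := by
      rwa [Ne, div_eq_one_iff_eq (by linarith)]
    have hrn : (p / (1 - p)) ^ n - 1 ≠ 0 := sub_ne_zero.2
      ((pow_eq_one_iff_of_nonneg (div_nonneg hp0 (by linarith)) (by omega)).not.2 hr)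
    rw [hprob, geom_sum_eq hr, geom_sum_eq hr]
    congr 1
    field_simp [sub_ne_zero.2 hr]
    ring
  · rw [hprob, hhalf]
    norm_num

/-- **Lemma (gambler's ruin).** For the walk with kernel `Q_p` started at `x ∈ L_ℓ`,
`0 < ℓ < n`: if `p ≠ q` then `P_x(τ_o < τ_n) = (rⁿ − r^ℓ)/(rⁿ − 1)` with `r = p/q`;
if `p = q = 1/2` then `P_x(τ_o < τ_n) = (n−ℓ)/n`. In particular the probability
depends only on `ℓ = ‖x‖`. -/
theorem statement6
    (p : ℝ) (hp : p ∈ Set.Ico (0 : ℝ) 1)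
    {Ω : Type} [MeasurableSpace Ω] (P : Measure Ω) [IsProbabilityMeasure P]
    (ℓ n : ℕ) (hℓ : 0 < ℓ) (hn : ℓ < n)
    (x : Z2) (hx : dnorm x = ℓ)
    (X : ℕ → Ω → Z2) (hwalk : IsWalkFrom P X (Qp p) x) :
    (p ≠ 1 - p →
      P {ω | hitTimeE X {origin} ω < hitTimeE X (layer n) ω}
        = ENNReal.ofReal (((p / (1 - p)) ^ n - (p / (1 - p)) ^ ℓ) / ((p / (1 - p)) ^ n - 1))) ∧
    (p = 1 / 2 →
      P {ω | hitTimeE X {origin} ω < hitTimeE X (layer n) ω}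
        = ENNReal.ofReal (((n : ℝ) - (ℓ : ℝ)) / (n : ℝ))) :=
  statement6_general p hp P ℓ n hn x hx X hwalk
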